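/- arXiv:2308.14386 — 2 statements merged into one kernel-verified Lean document; each statement's English description precedes it below -/
import Mathlib

section
/- Let θ₁₂, θ₂₃, θ₃₁ ∈ (0,π) satisfy θ₁₂+θ₂₃+θ₃₁ > π, θ₁₂+θ₂₃ < θ₃₁+π, θ₂₃+θ₃₁ < θ₁₂+π, and θ₃₁+θ₁₂ < θ₂₃+π, and let r₁, r₂, r₃ ∈ (0,π). Then there exist unit vectors z₁, z₂, z₃ ∈ ℝ³ such that ⟪z_μ, z_ν⟫ = cos r_μ cos r_ν − cos θ_μν · sin r_μ sin r_ν for every pair (μ,ν) ∈ {(1,2),(2,3),(3,1)}; any such z₁, z₂, z₃ are linearly independent; and if (z₁, z₂, z₃) and (z₁', z₂', z₃') are two such triples, then there is a linear isometry of ℝ³ sending z_μ to z_μ' for μ = 1,2,3. -/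
/-!
The prescribed Gram matrix of the centers is `S M S + c cᵀ`, where `S = diag (sin rᵢ)`,
`c = (cos rᵢ)` and `M` is the unit-diagonal matrix with off-diagonal entries `-cos θ_μν`.
The determinant of `M` factors as `-(cos θ₁₂ + cos (θ₂₃ - θ₃₁)) (cos θ₁₂ + cos (θ₂₃ + θ₃₁))`,
and by sum-to-product the angle inequalities make the first factor positive and the second
negative; so `M`, and with it `S M S + c cᵀ`, is positive definite. A positive definite
matrix is the Gram matrix of a basis of `ℝ³`, every family with this Gram matrix is linearly
independent, and two bases with the same Gram matrix differ by a linear isometry.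
-/

open Matrix Module Real
open scoped ComplexOrder

section Gram

variable {𝕜 ι : Type*} [RCLike 𝕜] [Fintype ι]

open scoped MatrixOrder in
theorem Matrix.PosSemidef.exists_gram_eq [DecidableEq ι] {G : Matrix ι ι 𝕜}
    (hG : G.PosSemidef) : ∃ v : ι → EuclideanSpace 𝕜 ι, gram 𝕜 v = G := by
  obtain ⟨B, rfl⟩ := CStarAlgebra.nonneg_iff_eq_star_mul_self.mp hG.nonneg
  exact ⟨fun j ↦ WithLp.toLp 2 fun i ↦ B i j,
    gram_eq_conjTranspose_mul (EuclideanSpace.basisFun ι 𝕜) _⟩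

theorem exists_linearIsometryEquiv_of_gram_eq {E : Type*} [NormedAddCommGroup E]
    [InnerProductSpace 𝕜 E] [Nonempty ι] {v w : ι → E} (hv : LinearIndependent 𝕜 v)
    (hcard : Fintype.card ι = finrank 𝕜 E) (hgram : gram 𝕜 v = gram 𝕜 w) :
    ∃ f : E ≃ₗᵢ[𝕜] E, ∀ i, f (v i) = w i := by
  have hw : LinearIndependent 𝕜 w := by
    rw [← posDef_gram_iff_linearIndependent, ← hgram]
    exact posDef_gram_of_linearIndependent hv
  let b := basisOfLinearIndependentOfCardEqFinrank hv hcard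
  let b' := basisOfLinearIndependentOfCardEqFinrank hw hcard
  let f := b.equiv b' (Equiv.refl ι)
  have hf : ∀ i, f (v i) = w i := fun i ↦ by
    simpa [b, b', f] using b.equiv_apply i b' (Equiv.refl ι)
  have hinner : ((innerₛₗ 𝕜).comp f.toLinearMap).compl₂ f.toLinearMap = innerₛₗ 𝕜 := by
    refine LinearMap.ext_basis b b fun i j ↦ ?_
    simpa [b, hf, gram_apply] using (congrFun (congrFun hgram i) j).symm
  exact ⟨f.isometryOfInner fun x y ↦ LinearMap.congr_fun₂ hinner x y, hf⟩

end Gram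

theorem Matrix.PosDef.diagonal_mul_mul_diagonal_add_vecMulVec {ι : Type*} [Fintype ι]
    [DecidableEq ι] {M : Matrix ι ι ℝ} (hM : M.PosDef) {s : ι → ℝ} (hs : ∀ i, s i ≠ 0)
    (c : ι → ℝ) : (diagonal s * M * diagonal s + vecMulVec c c).PosDef := by
  have hinj : Function.Injective (diagonal s).mulVec := fun x y h ↦ by
    ext i
    simpa [mulVec_diagonal, hs i] using congrFun h i
  simpa using (hM.conjTranspose_mul_mul_same hinj).add_posSemidef (posSemidef_vecMulVec_self_star c)

def unitGram (a b c : ℝ) : Matrix (Fin 3) (Fin 3) ℝ :=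
  !![1, a, c; a, 1, b; c, b, 1]

theorem gram_eq_unitGram_iff {E : Type*} [NormedAddCommGroup E] [InnerProductSpace ℝ E]
    {x y z : E} {a b c : ℝ} :
    gram ℝ ![x, y, z] = unitGram a b c ↔
      ‖x‖ = 1 ∧ ‖y‖ = 1 ∧ ‖z‖ = 1 ∧ inner ℝ x y = a ∧ inner ℝ y z = b ∧ inner ℝ z x = c := by
  rw [← Matrix.ext_iff]
  have := norm_nonneg x
  have := norm_nonneg y
  have := norm_nonneg z
  simp [Fin.forall_fin_succ, gram_apply, unitGram, real_inner_comm x y, real_inner_comm y z,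
    real_inner_comm z x]
  grind

theorem isHermitian_unitGram (a b c : ℝ) : (unitGram a b c).IsHermitian := by
  ext i j
  fin_cases i <;> fin_cases j <;> rfl

theorem det_unitGram (a b c : ℝ) :
    (unitGram a b c).det = 1 - a ^ 2 - b ^ 2 - c ^ 2 + 2 * a * b * c := by
  simp [unitGram, det_fin_three]
  ring

theorem posDef_unitGram {a b c : ℝ} (ha : a ^ 2 < 1) (hdet : 0 < (unitGram a b c).det) :
    (unitGram a b c).PosDef := by
  refine .of_dotProduct_mulVec_pos (isHermitian_unitGram a b c) fun x hx ↦ ?_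
  rw [det_unitGram] at hdet
  have ha' : 0 < 1 - a ^ 2 := by linarith
  have hq : (1 - a ^ 2) * (star x ⬝ᵥ unitGram a b c *ᵥ x) =
      (1 - a ^ 2) * (x 0 + a * x 1 + c * x 2) ^ 2 + ((1 - a ^ 2) * x 1 + (b - a * c) * x 2) ^ 2 +
        (1 - a ^ 2 - b ^ 2 - c ^ 2 + 2 * a * b * c) * x 2 ^ 2 := by
    simp [unitGram, dotProduct, mulVec, Fin.sum_univ_three]
    ring
  refine pos_of_mul_pos_right (hq ▸ ?_) ha'.le
  have h₀ := mul_nonneg ha'.le (sq_nonneg (x 0 + a * x 1 + c * x 2))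
  have h₁ := sq_nonneg ((1 - a ^ 2) * x 1 + (b - a * c) * x 2)
  rcases ne_or_eq (x 2) 0 with h2 | h2
  · nlinarith [mul_pos hdet (pow_two_pos_of_ne_zero h2)]
  simp only [h2, mul_zero, add_zero, zero_pow two_ne_zero] at h₀ h₁ ⊢
  rcases ne_or_eq (x 1) 0 with h1 | h1
  · nlinarith [pow_two_pos_of_ne_zero (mul_ne_zero ha'.ne' h1)]
  have h0 : x 0 ≠ 0 := fun h0 ↦ hx (by ext i; fin_cases i <;> assumption)
  simp only [h1, mul_zero, add_zero] at h₀ h₁ ⊢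
  nlinarith [mul_pos ha' (pow_two_pos_of_ne_zero h0)]

theorem det_unitGram_neg_cos (θ₁₂ θ₂₃ θ₃₁ : ℝ) :
    (unitGram (-cos θ₁₂) (-cos θ₂₃) (-cos θ₃₁)).det =
      -(cos θ₁₂ + cos (θ₂₃ - θ₃₁)) * (cos θ₁₂ + cos (θ₂₃ + θ₃₁)) := by
  rw [det_unitGram, cos_sub, cos_add]
  linear_combination (cos θ₃₁ ^ 2 - 1) * sin_sq_add_cos_sq θ₂₃ - sin θ₂₃ ^ 2 * sin_sq_add_cos_sq θ₃₁

theorem posDef_unitGram_neg_cos {θ₁₂ θ₂₃ θ₃₁ : ℝ}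
    (h₁₂ : θ₁₂ ∈ Set.Ioo 0 π) (h₂₃ : θ₂₃ ∈ Set.Ioo 0 π) (h₃₁ : θ₃₁ ∈ Set.Ioo 0 π)
    (hsum : π < θ₁₂ + θ₂₃ + θ₃₁)
    (ha : θ₁₂ + θ₂₃ < θ₃₁ + π) (hb : θ₂₃ + θ₃₁ < θ₁₂ + π) (hc : θ₃₁ + θ₁₂ < θ₂₃ + π) :
    (unitGram (-cos θ₁₂) (-cos θ₂₃) (-cos θ₃₁)).PosDef := by
  obtain ⟨h₁₂₀, h₁₂π⟩ := h₁₂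
  obtain ⟨h₂₃₀, h₂₃π⟩ := h₂₃
  obtain ⟨h₃₁₀, h₃₁π⟩ := h₃₁
  have hcos_diff : 0 < cos θ₁₂ + cos (θ₂₃ - θ₃₁) := by
    rw [cos_add_cos]
    have h₁ := cos_pos_of_mem_Ioo (x := (θ₁₂ + (θ₂₃ - θ₃₁)) / 2) ⟨by linarith, by linarith⟩
    have h₂ := cos_pos_of_mem_Ioo (x := (θ₁₂ - (θ₂₃ - θ₃₁)) / 2) ⟨by linarith, by linarith⟩
    positivity
  have hcos_sum : cos θ₁₂ + cos (θ₂₃ + θ₃₁) < 0 := by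
    rw [cos_add_cos]
    have h₁ := cos_neg_of_pi_div_two_lt_of_lt (x := (θ₁₂ + (θ₂₃ + θ₃₁)) / 2)
      (by linarith) (by linarith)
    have h₂ := cos_pos_of_mem_Ioo (x := (θ₁₂ - (θ₂₃ + θ₃₁)) / 2) ⟨by linarith, by linarith⟩
    nlinarith
  refine posDef_unitGram ?_ ?_
  · rw [neg_sq, cos_sq']
    nlinarith [sin_pos_of_pos_of_lt_pi h₁₂₀ h₁₂π]
  · rw [det_unitGram_neg_cos]
    exact mul_pos_of_neg_of_neg (neg_neg_of_pos hcos_diff) hcos_sum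

theorem unitGram_cap_centers_eq (r₁ r₂ r₃ θ₁₂ θ₂₃ θ₃₁ : ℝ) :
    unitGram (cos r₁ * cos r₂ - cos θ₁₂ * sin r₁ * sin r₂)
        (cos r₂ * cos r₃ - cos θ₂₃ * sin r₂ * sin r₃)
        (cos r₃ * cos r₁ - cos θ₃₁ * sin r₃ * sin r₁) =
      diagonal ![sin r₁, sin r₂, sin r₃] * unitGram (-cos θ₁₂) (-cos θ₂₃) (-cos θ₃₁) *
          diagonal ![sin r₁, sin r₂, sin r₃] +
        vecMulVec ![cos r₁, cos r₂, cos r₃] ![cos r₁, cos r₂, cos r₃] := by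
  ext i j
  fin_cases i <;> fin_cases j <;> simp [unitGram, vecMulVec] <;>
    linarith [sin_sq_add_cos_sq r₁, sin_sq_add_cos_sq r₂, sin_sq_add_cos_sq r₃]

/-- Lemma 4.1 (existence, nondegeneracy and uniqueness of the three-circle
configuration): under condition (c2), for any radii `r₁, r₂, r₃ ∈ (0,π)` there exist
unit vectors realizing the required inner products (the centers of the caps); any such
centers are linearly independent; and the configuration is unique up to a linear
isometry of `ℝ³`. -/
theorem three_circle_configuration (θ₁₂ θ₂₃ θ₃₁ r₁ r₂ r₃ : ℝ)
    (h₁₂ : θ₁₂ ∈ Set.Ioo 0 π) (h₂₃ : θ₂₃ ∈ Set.Ioo 0 π) (h₃₁ : θ₃₁ ∈ Set.Ioo 0 π)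
    (hsum : θ₁₂ + θ₂₃ + θ₃₁ > π)
    (ha : θ₁₂ + θ₂₃ < θ₃₁ + π) (hb : θ₂₃ + θ₃₁ < θ₁₂ + π) (hc : θ₃₁ + θ₁₂ < θ₂₃ + π)
    (hr₁ : r₁ ∈ Set.Ioo 0 π) (hr₂ : r₂ ∈ Set.Ioo 0 π) (hr₃ : r₃ ∈ Set.Ioo 0 π) :
    (∃ z₁ z₂ z₃ : EuclideanSpace ℝ (Fin 3),
        ‖z₁‖ = 1 ∧ ‖z₂‖ = 1 ∧ ‖z₃‖ = 1 ∧
        (inner ℝ z₁ z₂ : ℝ) = cos r₁ * cos r₂ - cos θ₁₂ * sin r₁ * sin r₂ ∧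
        (inner ℝ z₂ z₃ : ℝ) = cos r₂ * cos r₃ - cos θ₂₃ * sin r₂ * sin r₃ ∧
        (inner ℝ z₃ z₁ : ℝ) = cos r₃ * cos r₁ - cos θ₃₁ * sin r₃ * sin r₁) ∧
    (∀ z₁ z₂ z₃ : EuclideanSpace ℝ (Fin 3),
        ‖z₁‖ = 1 → ‖z₂‖ = 1 → ‖z₃‖ = 1 →
        (inner ℝ z₁ z₂ : ℝ) = cos r₁ * cos r₂ - cos θ₁₂ * sin r₁ * sin r₂ →
        (inner ℝ z₂ z₃ : ℝ) = cos r₂ * cos r₃ - cos θ₂₃ * sin r₂ * sin r₃ →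
        (inner ℝ z₃ z₁ : ℝ) = cos r₃ * cos r₁ - cos θ₃₁ * sin r₃ * sin r₁ →
        LinearIndependent ℝ ![z₁, z₂, z₃]) ∧
    (∀ z₁ z₂ z₃ z₁' z₂' z₃' : EuclideanSpace ℝ (Fin 3),
        ‖z₁‖ = 1 → ‖z₂‖ = 1 → ‖z₃‖ = 1 →
        (inner ℝ z₁ z₂ : ℝ) = cos r₁ * cos r₂ - cos θ₁₂ * sin r₁ * sin r₂ →
        (inner ℝ z₂ z₃ : ℝ) = cos r₂ * cos r₃ - cos θ₂₃ * sin r₂ * sin r₃ →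
        (inner ℝ z₃ z₁ : ℝ) = cos r₃ * cos r₁ - cos θ₃₁ * sin r₃ * sin r₁ →
        ‖z₁'‖ = 1 → ‖z₂'‖ = 1 → ‖z₃'‖ = 1 →
        (inner ℝ z₁' z₂' : ℝ) = cos r₁ * cos r₂ - cos θ₁₂ * sin r₁ * sin r₂ →
        (inner ℝ z₂' z₃' : ℝ) = cos r₂ * cos r₃ - cos θ₂₃ * sin r₂ * sin r₃ →
        (inner ℝ z₃' z₁' : ℝ) = cos r₃ * cos r₁ - cos θ₃₁ * sin r₃ * sin r₁ →
        ∃ f : EuclideanSpace ℝ (Fin 3) ≃ₗᵢ[ℝ] EuclideanSpace ℝ (Fin 3),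
          f z₁ = z₁' ∧ f z₂ = z₂' ∧ f z₃ = z₃') := by
  have hsin : ∀ i, ![sin r₁, sin r₂, sin r₃] i ≠ 0 := by
    simp [Fin.forall_fin_succ, (sin_pos_of_pos_of_lt_pi hr₁.1 hr₁.2).ne',
      (sin_pos_of_pos_of_lt_pi hr₂.1 hr₂.2).ne', (sin_pos_of_pos_of_lt_pi hr₃.1 hr₃.2).ne']
  have hG := unitGram_cap_centers_eq r₁ r₂ r₃ θ₁₂ θ₂₃ θ₃₁ ▸
    (posDef_unitGram_neg_cos h₁₂ h₂₃ h₃₁ hsum ha hb hc).diagonal_mul_mul_diagonal_add_vecMulVec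
      hsin ![cos r₁, cos r₂, cos r₃]
  refine ⟨?_, fun z₁ z₂ z₃ n₁ n₂ n₃ e₁₂ e₂₃ e₃₁ ↦ ?_,
    fun z₁ z₂ z₃ z₁' z₂' z₃' n₁ n₂ n₃ e₁₂ e₂₃ e₃₁ n₁' n₂' n₃' e₁₂' e₂₃' e₃₁' ↦ ?_⟩
  · obtain ⟨v, hv⟩ := hG.posSemidef.exists_gram_eq
    exact ⟨v 0, v 1, v 2, gram_eq_unitGram_iff.1 (FinVec.etaExpand_eq v ▸ hv)⟩
  · have hgram := gram_eq_unitGram_iff.2 ⟨n₁, n₂, n₃, e₁₂, e₂₃, e₃₁⟩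
    exact linearIndependent_of_posDef_gram (hgram ▸ hG)
  · have hgram := gram_eq_unitGram_iff.2 ⟨n₁, n₂, n₃, e₁₂, e₂₃, e₃₁⟩
    have hgram' := gram_eq_unitGram_iff.2 ⟨n₁', n₂', n₃', e₁₂', e₂₃', e₃₁'⟩
    obtain ⟨f, hf⟩ := exists_linearIsometryEquiv_of_gram_eq
      (linearIndependent_of_posDef_gram (hgram ▸ hG)) (by simp) (hgram.trans hgram'.symm)
    exact ⟨f, hf 0, hf 1, hf 2⟩
end

section
/- Let D₁ = D(c₁,r₁), D₂ = D(c₂,r₂), D₃ = D(c₃,r₃) be three pairwise intersecting spherical caps on the unit sphere S² with radii r₁, r₂, r₃ ∈ (0,π), and suppose there exist overlap angles θ₁₂, θ₂₃, θ₃₁ ∈ [0,π), i.e. cos θ_μν = (cos r_μ cos r_ν − ⟪c_μ,c_ν⟫)/(sin r_μ sin r_ν) for each pair. Assume the union of the three open caps {x ∈ S² : ⟪x,c_μ⟫ > cos r_μ} (μ = 1,2,3) is a proper subset of S². If θ₁₂ + θ₂₃ + θ₃₁ < π, then D₁ ∩ D₂ ∩ D₃ = ∅. -/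
/-!
Model `ℝ⁴ = ℝ³ × ℝ` with the Lorentz form `⟪c, c'⟫ - t t'`. The cap `D(c, r)` becomes the unit
spacelike vector `v = (c, cos r) / sin r`, the overlap angles satisfy `⟨vᵢ, vⱼ⟩ = -cos θᵢⱼ`, and a
point `x ∈ S²` becomes the null vector `(x, 1)`, with `⟨(x, 1), v⟩ ≥ 0` exactly when `x ∈ D(c, r)`.
For `z ∈ D₁ ∩ D₂ ∩ D₃` and `y` outside the three open caps, `(z, 1)` and `(y, 1)` span a timelike
plane (if `z ≠ y`) whose Lorentz-orthogonal complement is Euclidean. Projecting the `vᵢ` onto it and adding one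
coordinate for the discarded components gives unit vectors `uᵢ` in a Euclidean space with
`⟪uᵢ, uⱼ⟫ ≤ -cos θᵢⱼ`: the signs of `⟨vᵢ, (z, 1)⟩` and `⟨vᵢ, (y, 1)⟩` make the correction
nonpositive. Hence `∠(uᵢ, uⱼ) ≥ π - θᵢⱼ`, and as three angles between vectors sum to at most `2π`,
`θ₁₂ + θ₂₃ + θ₃₁ ≥ π`.
-/

open Real InnerProductGeometry

open scoped RealInnerProductSpace

variable {V : Type*} [NormedAddCommGroup V] [InnerProductSpace ℝ V]

theorem angle_add_angle_add_angle_le_two_pi (u₁ u₂ u₃ : V) :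
    angle u₁ u₂ + angle u₂ u₃ + angle u₃ u₁ ≤ 2 * π := by
  have h := angle_le_angle_add_angle u₃ (-u₂) u₁
  rw [angle_neg_right, angle_neg_left, angle_comm u₃ u₂, angle_comm u₂ u₁] at h
  linarith

theorem pi_sub_le_angle_of_inner_le_neg_cos {u v : V} (hu : ‖u‖ = 1) (hv : ‖v‖ = 1) {θ : ℝ}
    (hθ : θ ∈ Set.Icc 0 π) (h : ⟪u, v⟫ ≤ -cos θ) : π - θ ≤ angle u v := by
  rw [angle, hu, hv, mul_one, div_one]
  calc π - θ = arccos (cos (π - θ)) := (arccos_cos (by linarith [hθ.2]) (by linarith [hθ.1])).symm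
    _ ≤ arccos ⟪u, v⟫ := arccos_le_arccos (by rwa [cos_pi_sub])

theorem pi_le_add_add_of_inner_le_neg_cos {u₁ u₂ u₃ : V}
    (h₁ : ‖u₁‖ = 1) (h₂ : ‖u₂‖ = 1) (h₃ : ‖u₃‖ = 1) {θ₁₂ θ₂₃ θ₃₁ : ℝ}
    (hθ₁₂ : θ₁₂ ∈ Set.Icc 0 π) (hθ₂₃ : θ₂₃ ∈ Set.Icc 0 π) (hθ₃₁ : θ₃₁ ∈ Set.Icc 0 π)
    (h₁₂ : ⟪u₁, u₂⟫ ≤ -cos θ₁₂) (h₂₃ : ⟪u₂, u₃⟫ ≤ -cos θ₂₃) (h₃₁ : ⟪u₃, u₁⟫ ≤ -cos θ₃₁) :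
    π ≤ θ₁₂ + θ₂₃ + θ₃₁ := by
  linarith [angle_add_angle_add_angle_le_two_pi u₁ u₂ u₃,
    pi_sub_le_angle_of_inner_le_neg_cos h₁ h₂ hθ₁₂ h₁₂,
    pi_sub_le_angle_of_inner_le_neg_cos h₂ h₃ hθ₂₃ h₂₃,
    pi_sub_le_angle_of_inner_le_neg_cos h₃ h₁ hθ₃₁ h₃₁]

theorem sqrt_mul_sqrt_le {τ α β α' β' : ℝ} (hτ : 0 ≤ τ) (hα : 0 ≤ α) (hβ : 0 ≤ β) (hα' : 0 ≤ α')
    (hβ' : 0 ≤ β') : √(2 * τ * α * β) * √(2 * τ * α' * β') ≤ τ * (α * β' + α' * β) := by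
  rw [← sqrt_mul (by positivity), sqrt_le_left (by positivity)]
  nlinarith [mul_nonneg (sq_nonneg τ) (sq_nonneg (α * β' - α' * β))]

section CapLift

variable {x y : V}

theorem div_one_sub_inner_mul_cancel (hx : ‖x‖ = 1) (hy : ‖y‖ = 1) {c : V} {C : ℝ}
    (hxc : C ≤ ⟪x, c⟫) (hyc : ⟪y, c⟫ ≤ C) :
    (C - ⟪y, c⟫) / (1 - ⟪x, y⟫) * (1 - ⟪x, y⟫) = C - ⟪y, c⟫ ∧
      (⟪x, c⟫ - C) / (1 - ⟪x, y⟫) * (1 - ⟪x, y⟫) = ⟪x, c⟫ - C := by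
  have h : 1 - ⟪x, y⟫ = 0 → ⟪x, c⟫ = C ∧ ⟪y, c⟫ = C := fun h ↦ by
    obtain rfl : x = y := (inner_eq_one_iff_of_norm_eq_one (𝕜 := ℝ) hx hy).1 (by linarith)
    exact ⟨le_antisymm hyc hxc, le_antisymm hyc hxc⟩
  exact ⟨div_mul_cancel_of_imp fun h0 ↦ by rw [(h h0).2, sub_self],
    div_mul_cancel_of_imp fun h0 ↦ by rw [(h h0).1, sub_self]⟩

theorem inner_sub_smul_add_smul_sub (hx : ‖x‖ = 1) (hy : ‖y‖ = 1) {c c' : V}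
    {C C' α β α' β' : ℝ}
    (hα : α * (1 - ⟪x, y⟫) = C - ⟪y, c⟫) (hβ : β * (1 - ⟪x, y⟫) = ⟪x, c⟫ - C)
    (hα' : α' * (1 - ⟪x, y⟫) = C' - ⟪y, c'⟫) (hβ' : β' * (1 - ⟪x, y⟫) = ⟪x, c'⟫ - C') :
    ⟪c - C • x + β • (y - x), c' - C' • x + β' • (y - x)⟫
      = ⟪c, c'⟫ - C * C' - (1 - ⟪x, y⟫) * (α * β' + α' * β) := by
  have hxx : ⟪x, x⟫ = 1 := by rw [real_inner_self_eq_norm_sq, hx, one_pow]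
  have hyy : ⟪y, y⟫ = 1 := by rw [real_inner_self_eq_norm_sq, hy, one_pow]
  simp only [inner_add_left, inner_add_right, inner_sub_left, inner_sub_right,
    real_inner_smul_left, real_inner_smul_right, hxx, hyy, real_inner_comm x y,
    real_inner_comm x c, real_inner_comm y c]
  linear_combination β' * hα + β * hα' + (β' + C') * hβ + (β + C) * hβ'

theorem inner_lift_eq (hx : ‖x‖ = 1) (hy : ‖y‖ = 1) {c c' : V} {C C' α β α' β' : ℝ}
    (hα : α * (1 - ⟪x, y⟫) = C - ⟪y, c⟫) (hβ : β * (1 - ⟪x, y⟫) = ⟪x, c⟫ - C)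
    (hα' : α' * (1 - ⟪x, y⟫) = C' - ⟪y, c'⟫) (hβ' : β' * (1 - ⟪x, y⟫) = ⟪x, c'⟫ - C') :
    ⟪WithLp.toLp 2 (c - C • x + β • (y - x), √(2 * (1 - ⟪x, y⟫) * α * β)),
      WithLp.toLp 2 (c' - C' • x + β' • (y - x), √(2 * (1 - ⟪x, y⟫) * α' * β'))⟫
      = ⟪c, c'⟫ - C * C' - (1 - ⟪x, y⟫) * (α * β' + α' * β)
        + √(2 * (1 - ⟪x, y⟫) * α * β) * √(2 * (1 - ⟪x, y⟫) * α' * β') := by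
  rw [WithLp.prod_inner_apply, inner_sub_smul_add_smul_sub hx hy hα hβ hα' hβ']
  simp [mul_comm]

/-- The component of `(c, cos r) / sin r` Lorentz-orthogonal to `(x, 1)` and `(y, 1)`, carried
isometrically into `V` (where it is orthogonal to `x`), with the Lorentz length of the discarded
component as last coordinate. When `x = y` the divisions by `τ = 0` give `α = β = 0`, which is
still the right vector `(c - cos r • x) / sin r`. -/
noncomputable def capLift (x y c : V) (r : ℝ) : WithLp 2 (V × ℝ) :=
  let τ := 1 - ⟪x, y⟫
  let α := (cos r - ⟪y, c⟫) / τ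
  let β := (⟪x, c⟫ - cos r) / τ
  (sin r)⁻¹ • WithLp.toLp 2 (c - cos r • x + β • (y - x), √(2 * τ * α * β))

theorem inner_capLift_le (hx : ‖x‖ = 1) (hy : ‖y‖ = 1) {c c' : V} {r r' : ℝ}
    (hr : r ∈ Set.Ioo 0 π) (hr' : r' ∈ Set.Ioo 0 π) (hxc : cos r ≤ ⟪x, c⟫)
    (hyc : ⟪y, c⟫ ≤ cos r) (hxc' : cos r' ≤ ⟪x, c'⟫) (hyc' : ⟪y, c'⟫ ≤ cos r') :
    ⟪capLift x y c r, capLift x y c' r'⟫ ≤ (⟪c, c'⟫ - cos r * cos r') / (sin r * sin r') := by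
  have hτ : 0 ≤ 1 - ⟪x, y⟫ := sub_nonneg.2 (by simpa [hx, hy] using real_inner_le_norm x y)
  obtain ⟨hα, hβ⟩ := div_one_sub_inner_mul_cancel hx hy hxc hyc
  obtain ⟨hα', hβ'⟩ := div_one_sub_inner_mul_cancel hx hy hxc' hyc'
  have hs := sin_pos_of_pos_of_lt_pi hr.1 hr.2
  have hs' := sin_pos_of_pos_of_lt_pi hr'.1 hr'.2
  simp only [capLift]
  rw [real_inner_smul_left, real_inner_smul_right, inner_lift_eq hx hy hα hβ hα' hβ']
  calc _ ≤ (sin r)⁻¹ * ((sin r')⁻¹ * (⟪c, c'⟫ - cos r * cos r')) := by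
        gcongr
        linarith [sqrt_mul_sqrt_le hτ (div_nonneg (sub_nonneg.2 hyc) hτ)
          (div_nonneg (sub_nonneg.2 hxc) hτ) (div_nonneg (sub_nonneg.2 hyc') hτ)
          (div_nonneg (sub_nonneg.2 hxc') hτ)]
    _ = _ := by ring

theorem norm_capLift (hx : ‖x‖ = 1) (hy : ‖y‖ = 1) {c : V} (hc : ‖c‖ = 1) {r : ℝ}
    (hr : r ∈ Set.Ioo 0 π) (hxc : cos r ≤ ⟪x, c⟫) (hyc : ⟪y, c⟫ ≤ cos r) :
    ‖capLift x y c r‖ = 1 := by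
  have hτ : 0 ≤ 1 - ⟪x, y⟫ := sub_nonneg.2 (by simpa [hx, hy] using real_inner_le_norm x y)
  obtain ⟨hα, hβ⟩ := div_one_sub_inner_mul_cancel hx hy hxc hyc
  have hs := sin_pos_of_pos_of_lt_pi hr.1 hr.2
  have hcc : ⟪c, c⟫ = 1 := by rw [real_inner_self_eq_norm_sq, hc, one_pow]
  have h : ⟪capLift x y c r, capLift x y c r⟫ = 1 := by
    simp only [capLift]
    rw [real_inner_smul_left, real_inner_smul_right, inner_lift_eq hx hy hα hβ hα hβ,
      mul_self_sqrt (by positivity [div_nonneg (sub_nonneg.2 hyc) hτ]), hcc]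
    field_simp
    linear_combination -sin_sq_add_cos_sq r
  rw [norm_eq_sqrt_real_inner, h, sqrt_one]

end CapLift

theorem caps_empty_triple_intersection_of_not_cover_general
    (c₁ c₂ c₃ : EuclideanSpace ℝ (Fin 3))
    (hc₁ : ‖c₁‖ = 1) (hc₂ : ‖c₂‖ = 1) (hc₃ : ‖c₃‖ = 1)
    (r₁ r₂ r₃ : ℝ)
    (hr₁ : r₁ ∈ Set.Ioo 0 π) (hr₂ : r₂ ∈ Set.Ioo 0 π) (hr₃ : r₃ ∈ Set.Ioo 0 π)
    (D₁ D₂ D₃ : Set (EuclideanSpace ℝ (Fin 3)))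
    (hD₁ : D₁ = {x | ‖x‖ = 1 ∧ cos r₁ ≤ (inner ℝ x c₁ : ℝ)})
    (hD₂ : D₂ = {x | ‖x‖ = 1 ∧ cos r₂ ≤ (inner ℝ x c₂ : ℝ)})
    (hD₃ : D₃ = {x | ‖x‖ = 1 ∧ cos r₃ ≤ (inner ℝ x c₃ : ℝ)})
    (hcover : ∃ x : EuclideanSpace ℝ (Fin 3), ‖x‖ = 1 ∧
        (inner ℝ x c₁ : ℝ) ≤ cos r₁ ∧ (inner ℝ x c₂ : ℝ) ≤ cos r₂ ∧
        (inner ℝ x c₃ : ℝ) ≤ cos r₃)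
    (θ₁₂ θ₂₃ θ₃₁ : ℝ)
    (hθ₁₂ : θ₁₂ ∈ Set.Ico 0 π) (hθ₂₃ : θ₂₃ ∈ Set.Ico 0 π) (hθ₃₁ : θ₃₁ ∈ Set.Ico 0 π)
    (hcos₁₂ : cos θ₁₂ = (cos r₁ * cos r₂ - (inner ℝ c₁ c₂ : ℝ)) / (sin r₁ * sin r₂))
    (hcos₂₃ : cos θ₂₃ = (cos r₂ * cos r₃ - (inner ℝ c₂ c₃ : ℝ)) / (sin r₂ * sin r₃))
    (hcos₃₁ : cos θ₃₁ = (cos r₃ * cos r₁ - (inner ℝ c₃ c₁ : ℝ)) / (sin r₃ * sin r₁))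
    (hsum : θ₁₂ + θ₂₃ + θ₃₁ < π) :
    D₁ ∩ D₂ ∩ D₃ = ∅ := by
  obtain ⟨y, hy, hy₁, hy₂, hy₃⟩ := hcover
  refine Set.eq_empty_of_forall_notMem fun z hz ↦ hsum.not_ge ?_
  rw [hD₁, hD₂, hD₃] at hz
  obtain ⟨⟨⟨hz, hz₁⟩, -, hz₂⟩, -, hz₃⟩ := hz
  refine pi_le_add_add_of_inner_le_neg_cos (norm_capLift hz hy hc₁ hr₁ hz₁ hy₁)
    (norm_capLift hz hy hc₂ hr₂ hz₂ hy₂) (norm_capLift hz hy hc₃ hr₃ hz₃ hy₃)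
    (Set.Ico_subset_Icc_self hθ₁₂) (Set.Ico_subset_Icc_self hθ₂₃) (Set.Ico_subset_Icc_self hθ₃₁)
    ?_ ?_ ?_
  · rw [hcos₁₂, ← neg_div, neg_sub]
    exact inner_capLift_le hz hy hr₁ hr₂ hz₁ hy₁ hz₂ hy₂
  · rw [hcos₂₃, ← neg_div, neg_sub]
    exact inner_capLift_le hz hy hr₂ hr₃ hz₂ hy₂ hz₃ hy₃
  · rw [hcos₃₁, ← neg_div, neg_sub]
    exact inner_capLift_le hz hy hr₃ hr₁ hz₃ hy₃ hz₁ hy₁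

/-- Lemma 3.3: three pairwise intersecting spherical caps whose open parts do not
cover the sphere and whose overlap angles have sum less than `π` have empty common
intersection. -/
theorem caps_empty_triple_intersection_of_not_cover
    (c₁ c₂ c₃ : EuclideanSpace ℝ (Fin 3))
    (hc₁ : ‖c₁‖ = 1) (hc₂ : ‖c₂‖ = 1) (hc₃ : ‖c₃‖ = 1)
    (r₁ r₂ r₃ : ℝ)
    (hr₁ : r₁ ∈ Set.Ioo 0 π) (hr₂ : r₂ ∈ Set.Ioo 0 π) (hr₃ : r₃ ∈ Set.Ioo 0 π)
    (D₁ D₂ D₃ : Set (EuclideanSpace ℝ (Fin 3)))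
    (hD₁ : D₁ = {x | ‖x‖ = 1 ∧ cos r₁ ≤ (inner ℝ x c₁ : ℝ)})
    (hD₂ : D₂ = {x | ‖x‖ = 1 ∧ cos r₂ ≤ (inner ℝ x c₂ : ℝ)})
    (hD₃ : D₃ = {x | ‖x‖ = 1 ∧ cos r₃ ≤ (inner ℝ x c₃ : ℝ)})
    (h₁₂ : (D₁ ∩ D₂).Nonempty) (h₂₃ : (D₂ ∩ D₃).Nonempty) (h₃₁ : (D₃ ∩ D₁).Nonempty)
    (hcover : ∃ x : EuclideanSpace ℝ (Fin 3), ‖x‖ = 1 ∧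
        (inner ℝ x c₁ : ℝ) ≤ cos r₁ ∧ (inner ℝ x c₂ : ℝ) ≤ cos r₂ ∧
        (inner ℝ x c₃ : ℝ) ≤ cos r₃)
    (θ₁₂ θ₂₃ θ₃₁ : ℝ)
    (hθ₁₂ : θ₁₂ ∈ Set.Ico 0 π) (hθ₂₃ : θ₂₃ ∈ Set.Ico 0 π) (hθ₃₁ : θ₃₁ ∈ Set.Ico 0 π)
    (hcos₁₂ : cos θ₁₂ = (cos r₁ * cos r₂ - (inner ℝ c₁ c₂ : ℝ)) / (sin r₁ * sin r₂))
    (hcos₂₃ : cos θ₂₃ = (cos r₂ * cos r₃ - (inner ℝ c₂ c₃ : ℝ)) / (sin r₂ * sin r₃))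
    (hcos₃₁ : cos θ₃₁ = (cos r₃ * cos r₁ - (inner ℝ c₃ c₁ : ℝ)) / (sin r₃ * sin r₁))
    (hsum : θ₁₂ + θ₂₃ + θ₃₁ < π) :
    D₁ ∩ D₂ ∩ D₃ = ∅ :=
  caps_empty_triple_intersection_of_not_cover_general c₁ c₂ c₃ hc₁ hc₂ hc₃ r₁ r₂ r₃ hr₁ hr₂ hr₃ D₁
    D₂ D₃ hD₁ hD₂ hD₃ hcover θ₁₂ θ₂₃ θ₃₁ hθ₁₂ hθ₂₃ hθ₃₁ hcos₁₂ hcos₂₃ hcos₃₁ hsum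
end
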